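/- Let 1 < m < 2 and p > 2. There exists a constant C > 0 such that for all w ∈ H¹(ℝ) ∩ W^{1,∞}(ℝ) with ‖w‖_{L²} ≤ 1, (‖w‖_{L^p}^p)^{1 + (3m+1)/(p-2)} ≤ C · ∫_ℝ |w|^{p-2} |w'|^{m+1} dx. -/

import Mathlib

open MeasureTheory

lemma sup_le_integral_abs_deriv {F : ℝ → ℝ} (hF : Differentiable ℝ F)
    (hFi : Integrable F (volume : Measure ℝ))
    (hF'i : Integrable (deriv F) (volume : Measure ℝ)) (x : ℝ) :
    F x ≤ ∫ y, |deriv F y| := by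
  refine le_of_forall_pos_le_add fun ε hε => ?_
  have hy : ∃ y ≤ x, F y ≤ ε := by
    by_contra h
    push_neg at h
    have hres : IntegrableOn F (Set.Iic x) volume := hFi.integrableOn
    have hconst : Integrable (fun _ : ℝ => ε) (volume.restrict (Set.Iic x)) := by
      refine hres.mono' aestronglyMeasurable_const ?_
      refine (ae_restrict_iff' measurableSet_Iic).2 (Filter.Eventually.of_forall fun y hy => ?_)
      rw [Real.norm_of_nonneg hε.le]
      exact (h y hy).le
    rw [integrable_const_iff] at hconst
    rcases hconst with h0 | hfin
    · exact hε.ne' h0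
    · have := hfin.measure_univ_lt_top
      simp [Real.volume_Iic] at this
  obtain ⟨y, hyx, hFy⟩ := hy
  have hftc : ∫ t in y..x, deriv F t = F x - F y :=
    intervalIntegral.integral_deriv_eq_sub (fun t _ => hF t) hF'i.intervalIntegrable
  have h1 : |∫ t in y..x, deriv F t| ≤ ∫ t in y..x, |deriv F t| :=
    intervalIntegral.abs_integral_le_integral_abs hyx
  have h2 : ∫ t in y..x, |deriv F t| ≤ ∫ t, |deriv F t| := by
    rw [intervalIntegral.integral_of_le hyx]
    exact setIntegral_le_integral hF'i.abs
      (Filter.Eventually.of_forall fun t => abs_nonneg _)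
  have : F x - F y ≤ ∫ t, |deriv F t| := by
    calc F x - F y = ∫ t in y..x, deriv F t := hftc.symm
      _ ≤ |∫ t in y..x, deriv F t| := le_abs_self _
      _ ≤ ∫ t in y..x, |deriv F t| := h1
      _ ≤ ∫ t, |deriv F t| := h2
  linarith

lemma memLp_of_integrable_rpow {f : ℝ → ℝ} {r : ℝ} (hr : 1 ≤ r)
    (hf : AEStronglyMeasurable f (volume : Measure ℝ))
    (hi : Integrable (fun x => |f x| ^ r) (volume : Measure ℝ)) :
    MemLp f (ENNReal.ofReal r) (volume : Measure ℝ) := by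
  have hr0 : 0 < r := lt_of_lt_of_le one_pos hr
  have hq0 : ENNReal.ofReal r ≠ 0 := by simp [ENNReal.ofReal_eq_zero, not_le, hr0]
  have hqt : ENNReal.ofReal r ≠ ⊤ := ENNReal.ofReal_ne_top
  have h1 : MemLp (fun x : ℝ => ‖f x‖ ^ (ENNReal.ofReal r).toReal)
      ((ENNReal.ofReal r) / (ENNReal.ofReal r)) (volume : Measure ℝ) := by
    rw [ENNReal.div_self hq0 hqt]
    rw [memLp_one_iff_integrable]
    simpa [Real.norm_eq_abs, ENNReal.toReal_ofReal hr0.le] using hi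
  exact (memLp_norm_rpow_iff hf hq0 hqt).1 h1

lemma sq_rpow_eq (a : ℝ) (s : ℝ) : ((a : ℝ) ^ 2) ^ s = |a| ^ (2 * s) := by
  rw [← sq_abs a, ← Real.rpow_natCast |a| 2, ← Real.rpow_mul (abs_nonneg a)]
  norm_num

lemma abs_rpow_split (a : ℝ) {s t : ℝ} (hs : 0 < s) (ht : 0 < t) :
    |a| ^ (s + t) = |a| ^ s * |a| ^ t := by
  rcases eq_or_ne a 0 with h | h
  · simp [h, Real.zero_rpow hs.ne', Real.zero_rpow ht.ne',
      Real.zero_rpow (by positivity : (0:ℝ) < s + t).ne']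
  · exact Real.rpow_add (abs_pos.2 h) _ _

lemma abs_rpow_two (a : ℝ) : |a| ^ (2 : ℝ) = a ^ 2 := by
  rw [show (2:ℝ) = ((2:ℕ):ℝ) by norm_num, Real.rpow_natCast, sq_abs]
open MeasureTheory

/-- Proposition 4 of the paper: for `1 < m < 2`, `p > 2` there is `C > 0`
such that for all `w ∈ H¹(ℝ) ∩ W^{1,∞}(ℝ)` with `‖w‖_{L²} ≤ 1`,
`(‖w‖_p^p)^{1 + (3m+1)/(p-2)} ≤ C ∫ |w|^{p-2} |w'|^{m+1}`. -/
theorem stmt_8 (m p : ℝ) (hm1 : 1 < m) (hm2 : m < 2) (hp : 2 < p) :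
    ∃ C : ℝ, 0 < C ∧
      ∀ w : ℝ → ℝ, Differentiable ℝ w →
        MemLp w 2 (volume : Measure ℝ) →
        MemLp (deriv w) 2 (volume : Measure ℝ) →
        (∃ K : ℝ, ∀ x : ℝ, |w x| ≤ K ∧ |deriv w x| ≤ K) →
        (∫ x : ℝ, (w x) ^ 2) ≤ 1 →
        (∫ x : ℝ, |w x| ^ p) ^ (1 + (3 * m + 1) / (p - 2)) ≤
          C * ∫ x : ℝ, |w x| ^ (p - 2) * |deriv w x| ^ (m + 1) := by
  -- abbreviations
  set q : ℝ := (p + 3 * m - 1) / (m + 1) with hqdef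
  have hm0 : (0:ℝ) < m + 1 := by linarith
  have hq2 : 2 < q := by
    rw [hqdef, lt_div_iff₀ hm0]; linarith
  have hq0 : 0 < q := by linarith
  have hp2 : (0:ℝ) < p - 2 := by linarith
  refine ⟨q ^ (m + 1), Real.rpow_pos_of_pos hq0 _, ?_⟩
  intro w hdiff hw2mem hd2mem ⟨K, hK⟩ hL2
  set d : ℝ → ℝ := deriv w with hddef
  have hK0 : 0 ≤ K := le_trans (abs_nonneg _) (hK 0).1
  have hwmeas : Measurable w := hdiff.continuous.measurable
  have hdmeas : Measurable d := measurable_deriv w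
  have hw2 : Integrable (fun x => w x ^ 2) volume := hw2mem.integrable_sq
  have hd2 : Integrable (fun x => d x ^ 2) volume := hd2mem.integrable_sq
  -- the dissipation integrand
  set G : ℝ → ℝ := fun x => |w x| ^ (p - 2) * |d x| ^ (m + 1) with hGdef
  have hGmeas : Measurable G :=
    ((Real.continuous_rpow_const hp2.le).measurable.comp hwmeas.abs).mul
      ((Real.continuous_rpow_const (by linarith : (0:ℝ) ≤ m + 1)).measurable.comp hdmeas.abs)
  have hG0 : ∀ x, 0 ≤ G x := fun x => by positivity
  have hGint : Integrable G volume := by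
    refine (hd2.const_mul (K ^ (p - 2) * K ^ (m - 1))).mono'
      hGmeas.aestronglyMeasurable (Filter.Eventually.of_forall fun x => ?_)
    rw [Real.norm_of_nonneg (hG0 x)]
    have h1 : |w x| ^ (p - 2) ≤ K ^ (p - 2) :=
      Real.rpow_le_rpow (abs_nonneg _) (hK x).1 hp2.le
    have h2 : |d x| ^ (m + 1) ≤ K ^ (m - 1) * d x ^ 2 := by
      have : |d x| ^ (m + 1) = |d x| ^ (m - 1) * |d x| ^ (2:ℝ) := by
        rw [show m + 1 = (m - 1) + 2 by ring,
          abs_rpow_split (d x) (by linarith : (0:ℝ) < m - 1) (by norm_num : (0:ℝ) < 2)]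
      rw [this, abs_rpow_two]
      have := Real.rpow_le_rpow (abs_nonneg _) (hK x).2 (by linarith : (0:ℝ) ≤ m - 1)
      exact mul_le_mul_of_nonneg_right this (sq_nonneg _)
    calc G x ≤ K ^ (p - 2) * (K ^ (m - 1) * d x ^ 2) := by
          apply mul_le_mul h1 h2 (by positivity) (by positivity)
      _ = K ^ (p - 2) * K ^ (m - 1) * d x ^ 2 := by ring
  have hGI0 : 0 ≤ ∫ x, G x := integral_nonneg hG0
  -- the auxiliary function F = |w|^q and its derivative
  set F : ℝ → ℝ := fun x => (w x ^ 2) ^ (q / 2) with hFdef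
  have hFeq : ∀ x, F x = |w x| ^ q := fun x => by
    show (w x ^ 2) ^ (q / 2) = |w x| ^ q
    rw [sq_rpow_eq, show 2 * (q / 2) = q by ring]
  set F' : ℝ → ℝ := fun x => q * |w x| ^ (q - 2) * (w x * d x) with hF'def
  have hFD : ∀ x, HasDerivAt F (F' x) x := by
    intro x
    have hsq : HasDerivAt (fun y => w y ^ 2) (2 * w x * d x) x := by
      have := ((hdiff x).hasDerivAt).fun_pow 2
      simpa [hddef] using this.congr_deriv (by ring)
    have houter : HasDerivAt (fun t : ℝ => t ^ (q / 2))
        ((q / 2) * (w x ^ 2) ^ (q / 2 - 1)) (w x ^ 2) :=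
      Real.hasDerivAt_rpow_const (Or.inr (by linarith : (1:ℝ) ≤ q / 2))
    have := houter.comp x hsq
    refine this.congr_deriv ?_
    rw [hF'def]
    have : (w x ^ 2) ^ (q / 2 - 1) = |w x| ^ (q - 2) := by
      rw [sq_rpow_eq, show 2 * (q / 2 - 1) = q - 2 by ring]
    rw [this]; ring
  have hFdiff : Differentiable ℝ F := fun x => (hFD x).differentiableAt
  have hderivF : deriv F = F' := funext fun x => (hFD x).deriv
  -- |F'| pointwise
  have habsF' : ∀ x, |F' x| = q * (|w x| ^ (q - 1) * |d x|) := by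
    intro x
    rw [hF'def, abs_mul, abs_mul, abs_mul, abs_of_nonneg hq0.le,
      abs_of_nonneg (Real.rpow_nonneg (abs_nonneg _) _)]
    have : |w x| ^ (q - 2) * |w x| = |w x| ^ (q - 1) := by
      rw [show q - 1 = (q - 2) + 1 by ring,
        abs_rpow_split (w x) (by linarith : (0:ℝ) < q - 2) one_pos, Real.rpow_one]
    rw [← this]; ring
  -- integrability of F and F'
  have hFint : Integrable F volume := by
    refine (hw2.const_mul (K ^ (q - 2))).mono'
      ((Real.continuous_rpow_const (by positivity : (0:ℝ) ≤ q / 2)).measurable.comp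
        (hwmeas.pow measurable_const)).aestronglyMeasurable
      (Filter.Eventually.of_forall fun x => ?_)
    rw [Real.norm_of_nonneg (by rw [hFeq]; positivity), hFeq]
    have : |w x| ^ q = |w x| ^ (q - 2) * |w x| ^ (2:ℝ) := by
      rw [← abs_rpow_split (w x) (by linarith : (0:ℝ) < q - 2) (by norm_num : (0:ℝ) < 2)]
      norm_num
    rw [this, abs_rpow_two]
    exact mul_le_mul_of_nonneg_right
      (Real.rpow_le_rpow (abs_nonneg _) (hK x).1 (by linarith)) (sq_nonneg _)
  have hF'int : Integrable F' volume := by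
    have hmeas : Measurable F' := by
      refine (measurable_const.mul
        ((Real.continuous_rpow_const (by linarith : (0:ℝ) ≤ q - 2)).measurable.comp
          hwmeas.abs)).mul (hwmeas.mul hdmeas)
    refine ((hw2.add hd2).const_mul (q * K ^ (q - 2) / 2)).mono'
      hmeas.aestronglyMeasurable (Filter.Eventually.of_forall fun x => ?_)
    rw [Real.norm_eq_abs, habsF']
    have h1 : |w x| ^ (q - 1) ≤ K ^ (q - 2) * |w x| := by
      rw [show q - 1 = (q - 2) + 1 by ring,
        abs_rpow_split (w x) (by linarith : (0:ℝ) < q - 2) one_pos, Real.rpow_one]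
      exact mul_le_mul_of_nonneg_right
        (Real.rpow_le_rpow (abs_nonneg _) (hK x).1 (by linarith)) (abs_nonneg _)
    have h2 : |w x| * |d x| ≤ (w x ^ 2 + d x ^ 2) / 2 := by
      nlinarith [sq_nonneg (|w x| - |d x|), sq_abs (w x), sq_abs (d x)]
    calc q * (|w x| ^ (q - 1) * |d x|) ≤ q * (K ^ (q - 2) * |w x| * |d x|) := by
          apply mul_le_mul_of_nonneg_left _ hq0.le
          exact mul_le_mul_of_nonneg_right h1 (abs_nonneg _)
      _ = q * K ^ (q - 2) * (|w x| * |d x|) := by ring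
      _ ≤ q * K ^ (q - 2) * ((w x ^ 2 + d x ^ 2) / 2) := by
          apply mul_le_mul_of_nonneg_left h2 (by positivity)
      _ = q * K ^ (q - 2) / 2 * (w x ^ 2 + d x ^ 2) := by ring
  -- Hölder
  set f : ℝ → ℝ := fun x => |w x| ^ ((p - 2) / (m + 1)) * |d x| with hfdef
  set g : ℝ → ℝ := fun x => |w x| ^ (2 * m / (m + 1)) with hgdef
  have hf0 : ∀ x, 0 ≤ f x := fun x => by positivity
  have hg0 : ∀ x, 0 ≤ g x := fun x => by positivity
  have hfmeas : Measurable f :=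
    ((Real.continuous_rpow_const (by positivity : (0:ℝ) ≤ (p-2)/(m+1))).measurable.comp
      hwmeas.abs).mul hdmeas.abs
  have hgmeas : Measurable g :=
    (Real.continuous_rpow_const (by positivity : (0:ℝ) ≤ 2*m/(m+1))).measurable.comp hwmeas.abs
  have hfpow : ∀ x, f x ^ (m + 1) = G x := by
    intro x
    rw [hfdef, hGdef]
    rw [Real.mul_rpow (Real.rpow_nonneg (abs_nonneg _) _) (abs_nonneg _),
      ← Real.rpow_mul (abs_nonneg _), div_mul_cancel₀ _ hm0.ne']
  have hm' : (0:ℝ) < m := by linarith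
  have hgpow : ∀ x, g x ^ ((m + 1) / m) = w x ^ 2 := by
    intro x
    rw [hgdef, ← Real.rpow_mul (abs_nonneg _),
      show 2 * m / (m + 1) * ((m + 1) / m) = 2 by field_simp,
      abs_rpow_two]
  have hfmem : MemLp f (ENNReal.ofReal (m + 1)) volume := by
    apply memLp_of_integrable_rpow (by linarith) hfmeas.aestronglyMeasurable
    have he : (fun x => |f x| ^ (m + 1)) = G :=
      funext fun x => by rw [abs_of_nonneg (hf0 x), hfpow]
    rw [he]; exact hGint
  have hgmem : MemLp g (ENNReal.ofReal ((m + 1) / m)) volume := by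
    apply memLp_of_integrable_rpow ?_ hgmeas.aestronglyMeasurable
    · have he : (fun x => |g x| ^ ((m + 1) / m)) = fun x => w x ^ 2 :=
        funext fun x => by rw [abs_of_nonneg (hg0 x), hgpow]
      rw [he]; exact hw2
    · rw [le_div_iff₀ hm']; linarith
  have hconj : Real.HolderConjugate (m + 1) ((m + 1) / m) :=
    Real.holderConjugate_iff.mpr ⟨by linarith, by rw [inv_div]; field_simp; ring⟩
  have hHolder := integral_mul_le_Lp_mul_Lq_of_nonneg hconj
    (Filter.Eventually.of_forall hf0) (Filter.Eventually.of_forall hg0) hfmem hgmem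
  have hIfg : ∫ x, f x * g x ≤ (∫ x, G x) ^ (1 / (m + 1)) := by
    have e1 : (∫ x, f x ^ (m + 1)) = ∫ x, G x :=
      integral_congr_ae (Filter.Eventually.of_forall fun x => hfpow x)
    have e2 : (∫ x, g x ^ ((m + 1) / m)) = ∫ x, w x ^ 2 :=
      integral_congr_ae (Filter.Eventually.of_forall fun x => hgpow x)
    calc ∫ x, f x * g x
        ≤ (∫ x, f x ^ (m + 1)) ^ (1 / (m + 1)) *
          (∫ x, g x ^ ((m + 1) / m)) ^ (1 / ((m + 1) / m)) := hHolder
      _ = (∫ x, G x) ^ (1 / (m + 1)) * (∫ x, w x ^ 2) ^ (1 / ((m + 1) / m)) := by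
          rw [e1, e2]
      _ ≤ (∫ x, G x) ^ (1 / (m + 1)) * 1 := by
          refine mul_le_mul_of_nonneg_left ?_ (Real.rpow_nonneg hGI0 _)
          exact Real.rpow_le_one (integral_nonneg fun x => sq_nonneg _) hL2 (by positivity)
      _ = (∫ x, G x) ^ (1 / (m + 1)) := mul_one _
  set A : ℝ := q * (∫ x, G x) ^ (1 / (m + 1)) with hAdef
  have hA0 : 0 ≤ A := mul_nonneg hq0.le (Real.rpow_nonneg hGI0 _)
  -- pointwise sup bound
  have hfg : ∀ y, f y * g y = |w y| ^ (q - 1) * |d y| := by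
    intro y
    rw [hfdef, hgdef,
      show q - 1 = (p - 2) / (m + 1) + 2 * m / (m + 1) by rw [hqdef]; field_simp; ring,
      abs_rpow_split (w y) (by positivity) (by positivity)]
    ring
  have hsup : ∀ x, |w x| ^ q ≤ A := by
    intro x
    have hF'int2 : Integrable (deriv F) volume := hderivF ▸ hF'int
    have h := sup_le_integral_abs_deriv hFdiff hFint hF'int2 x
    rw [hFeq] at h
    refine h.trans ?_
    have e3 : ∫ y, |deriv F y| = q * ∫ y, f y * g y := by
      rw [hderivF, ← integral_const_mul]
      refine integral_congr_ae (Filter.Eventually.of_forall fun y => ?_)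
      simp only [habsF', hfg]
    rw [e3, hAdef]
    exact mul_le_mul_of_nonneg_left hIfg hq0.le
  -- integral of |w|^p
  have hwp_split : ∀ x, |w x| ^ p = |w x| ^ (p - 2) * w x ^ 2 := by
    intro x
    rw [show p = (p - 2) + 2 by ring,
      abs_rpow_split (w x) hp2 (by norm_num : (0:ℝ) < 2), abs_rpow_two]
    ring_nf
  have hwp_meas : Measurable (fun x => |w x| ^ p) :=
    (Real.continuous_rpow_const (by linarith : (0:ℝ) ≤ p)).measurable.comp hwmeas.abs
  have hwp_int : Integrable (fun x => |w x| ^ p) volume := by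
    refine (hw2.const_mul (K ^ (p - 2))).mono' hwp_meas.aestronglyMeasurable
      (Filter.Eventually.of_forall fun x => ?_)
    rw [Real.norm_of_nonneg (Real.rpow_nonneg (abs_nonneg _) _), hwp_split]
    exact mul_le_mul_of_nonneg_right
      (Real.rpow_le_rpow (abs_nonneg _) (hK x).1 hp2.le) (sq_nonneg _)
  have hwp_le : ∀ x, |w x| ^ p ≤ A ^ ((p - 2) / q) * w x ^ 2 := by
    intro x
    rw [hwp_split]
    refine mul_le_mul_of_nonneg_right ?_ (sq_nonneg _)
    have e4 : |w x| ^ (p - 2) = (|w x| ^ q) ^ ((p - 2) / q) := by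
      rw [← Real.rpow_mul (abs_nonneg _), mul_div_cancel₀ _ hq0.ne']
    rw [e4]
    exact Real.rpow_le_rpow (Real.rpow_nonneg (abs_nonneg _) _) (hsup x)
      (by positivity)
  have hIp : (∫ x, |w x| ^ p) ≤ A ^ ((p - 2) / q) := by
    calc (∫ x, |w x| ^ p) ≤ ∫ x, A ^ ((p - 2) / q) * w x ^ 2 :=
          integral_mono hwp_int (hw2.const_mul _) hwp_le
      _ = A ^ ((p - 2) / q) * ∫ x, w x ^ 2 := integral_const_mul _ _
      _ ≤ A ^ ((p - 2) / q) * 1 :=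
          mul_le_mul_of_nonneg_left hL2 (Real.rpow_nonneg hA0 _)
      _ = A ^ ((p - 2) / q) := mul_one _
  -- final chain
  have hIp0 : 0 ≤ ∫ x, |w x| ^ p :=
    integral_nonneg fun x => Real.rpow_nonneg (abs_nonneg _) _
  have hν0 : 0 ≤ 1 + (3 * m + 1) / (p - 2) := by
    have : 0 < (3 * m + 1) / (p - 2) := div_pos (by linarith) hp2
    linarith
  have hpm : p + 3 * m - 1 ≠ 0 := ne_of_gt (by linarith)
  calc (∫ x, |w x| ^ p) ^ (1 + (3 * m + 1) / (p - 2))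
      ≤ (A ^ ((p - 2) / q)) ^ (1 + (3 * m + 1) / (p - 2)) :=
        Real.rpow_le_rpow hIp0 hIp hν0
    _ = A ^ ((p - 2) / q * (1 + (3 * m + 1) / (p - 2))) := (Real.rpow_mul hA0 _ _).symm
    _ = A ^ (m + 1) := by
        rw [show (p - 2) / q * (1 + (3 * m + 1) / (p - 2)) = m + 1 by
          rw [hqdef]; field_simp; ring]
    _ = q ^ (m + 1) * ∫ x, G x := by
        rw [hAdef, Real.mul_rpow hq0.le (Real.rpow_nonneg hGI0 _),
          ← Real.rpow_mul hGI0, one_div_mul_cancel hm0.ne', Real.rpow_one]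
    _ = q ^ (m + 1) * ∫ x, |w x| ^ (p - 2) * |d x| ^ (m + 1) := by rw [hGdef]
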